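/- Let $a \in (0,1)$, let $\mu$ be a probability measure on $[0,\infty)$ with finite mean $m_\mu = \int x\, d\mu(x)$, and let $(X_n)_{n\geq 1}$ be a sequence of nonnegative random variables on a probability space $(\Omega, P)$ such that for all $n \geq 1$, the conditional law of $X_{n+1}$ given $X_1,\dots,X_n$ is absolutely continuous with respect to $\mu$ with Radon–Nikodym density bounded between $a$ and $a^{-1}$ (and the law of $X_1$ satisfies the same bound with respect to $\mu$). Then $P$-almost surely, $a\, m_\mu \leq \liminf_{n\to\infty} \frac{1}{n}\sum_{k=1}^n X_k \leq \limsup_{n\to\infty} \frac{1}{n}\sum_{k=1}^n X_k \leq a^{-1} m_\mu$. -/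

import Mathlib

/-!
Truncate: `Z_k = X_k 1{X_k ≤ k}` for the upper bound and `Z_k = X_k 1{X_k ≤ K}`, `K` fixed, for
the lower one. The series `∑ (Z_k - E[Z_k | X_1, …, X_{k-1}]) / k` is an L²-bounded martingale,
since the sandwich bound compares `E[Z_k²]` with the same moment under `μ` and
`∑ k⁻² ∫ x² 1{x ≤ k} dμ ≤ 2 m_μ`. By martingale convergence and Kronecker's lemma the averages of
the `Z_k` and of their conditional means have the same asymptotics, and the conditional means lie
in `[a ∫ x 1{x ≤ K} dμ, a⁻¹ m_μ]`. Finally `∑ P(X_k > k) ≤ a⁻¹ ∑ μ(x > k) < ∞`, so `X_k = Z_k`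
eventually by Borel–Cantelli, and `K → ∞` gives the lower bound.
-/

open MeasureTheory Filter ProbabilityTheory Finset Topology
open scoped ENNReal

theorem tendsto_sum_range_div_zero_of_tendsto_sum_div_succ {v : ℕ → ℝ} {L : ℝ}
    (h : Tendsto (fun n => ∑ i ∈ range n, v i / (i + 1)) atTop (𝓝 L)) :
    Tendsto (fun n => (∑ i ∈ range n, v i) / n) atTop (𝓝 0) := by
  set B : ℕ → ℝ := fun n => ∑ i ∈ range n, v i / (i + 1)
  have abel : ∀ n : ℕ, ∑ i ∈ range n, v i = n * B n - ∑ j ∈ range n, B j := by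
    intro n
    induction n with
    | zero => simp
    | succ n ih =>
      simp only [B, sum_range_succ] at ih ⊢
      rw [ih]
      field_simp
      push_cast
      ring
  have hlim : Tendsto (fun n : ℕ => B n - (n : ℝ)⁻¹ * ∑ j ∈ range n, B j) atTop (𝓝 0) := by
    simpa using h.sub h.cesaro
  refine hlim.congr' ?_
  filter_upwards [eventually_ne_atTop 0] with n hn
  rw [abel]
  field_simp

lemma sum_Icc_one_eq_sum_range (f : ℕ → ℝ) (n : ℕ) :
    ∑ k ∈ Icc 1 n, f k = ∑ i ∈ range n, f (i + 1) := by
  induction n with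
  | zero => simp
  | succ n ih => rw [sum_Icc_succ_top (by omega), ih, sum_range_succ]

lemma limsup_sum_div_le {y z w : ℕ → ℝ} {C : ℝ} (hy : ∀ i, 0 ≤ y i)
    (hyz : ∀ᶠ i in atTop, y i = z i)
    (hzw : Tendsto (fun n : ℕ => (∑ i ∈ range n, (z i - w i)) / n) atTop (𝓝 0))
    (hw : ∀ i, w i ≤ C) :
    IsBoundedUnder (· ≤ ·) atTop (fun n : ℕ => (∑ i ∈ range n, y i) / n) ∧
      limsup (fun n : ℕ => (∑ i ∈ range n, y i) / n) atTop ≤ C := by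
  obtain ⟨N, hN⟩ := eventually_atTop.1 hyz
  set e : ℕ → ℝ := fun n => (∑ i ∈ range N, (y i - z i)) / n + (∑ i ∈ range n, (z i - w i)) / n
  have he : Tendsto (fun n => C + e n) atTop (𝓝 C) := by
    simpa only [add_zero] using ((tendsto_const_div_atTop_nhds_zero_nat _).add hzw).const_add C
  have hle : ∀ᶠ n : ℕ in atTop, (∑ i ∈ range n, y i) / n ≤ C + e n := by
    filter_upwards [eventually_ge_atTop N, eventually_gt_atTop 0] with n hNn hn
    have hsplit : ∑ i ∈ range n, y i
        = ∑ i ∈ range N, (y i - z i) + ∑ i ∈ range n, (z i - w i) + ∑ i ∈ range n, w i := by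
      rw [← eventually_constant_sum (fun i hi => sub_eq_zero.2 (hN i hi)) hNn,
        ← sum_add_distrib, ← sum_add_distrib]
      exact sum_congr rfl fun i _ => by ring
    have hwsum : (∑ i ∈ range n, w i) / n ≤ C := by
      rw [div_le_iff₀ (by exact_mod_cast hn)]
      simpa [mul_comm] using sum_le_sum fun i (_ : i ∈ range n) => hw i
    rw [hsplit, add_div, add_div]
    linarith
  have hbdd_below : IsBoundedUnder (· ≥ ·) atTop (fun n : ℕ => (∑ i ∈ range n, y i) / n) :=
    isBoundedUnder_of ⟨0, fun n => div_nonneg (sum_nonneg fun i _ => hy i) n.cast_nonneg⟩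
  exact ⟨he.isBoundedUnder_le.mono_le hle,
    (limsup_le_limsup hle hbdd_below.isCoboundedUnder_flip he.isBoundedUnder_le).trans_eq
      he.limsup_eq⟩

lemma le_liminf_sum_div {y z w : ℕ → ℝ} {c : ℝ} (hzy : ∀ i, z i ≤ y i)
    (hzw : Tendsto (fun n : ℕ => (∑ i ∈ range n, (z i - w i)) / n) atTop (𝓝 0))
    (hw : ∀ i, c ≤ w i)
    (hbdd : IsBoundedUnder (· ≤ ·) atTop (fun n : ℕ => (∑ i ∈ range n, y i) / n)) :
    c ≤ liminf (fun n : ℕ => (∑ i ∈ range n, y i) / n) atTop := by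
  have he : Tendsto (fun n : ℕ => c + (∑ i ∈ range n, (z i - w i)) / n) atTop (𝓝 c) := by
    simpa using hzw.const_add c
  have hle : ∀ᶠ n : ℕ in atTop,
      c + (∑ i ∈ range n, (z i - w i)) / n ≤ (∑ i ∈ range n, y i) / n := by
    filter_upwards [eventually_gt_atTop 0] with n hn
    have hn' : (0 : ℝ) < n := by exact_mod_cast hn
    have hwsum : n * c ≤ ∑ i ∈ range n, w i := by
      simpa [mul_comm] using sum_le_sum fun i (_ : i ∈ range n) => hw i
    have hzsum : ∑ i ∈ range n, z i ≤ ∑ i ∈ range n, y i := sum_le_sum fun i _ => hzy i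
    rw [sum_sub_distrib, ← le_sub_iff_add_le, ← sub_div, le_div_iff₀ hn']
    linarith
  exact he.liminf_eq.symm.le.trans
    (liminf_le_liminf hle he.isBoundedUnder_ge hbdd.isCoboundedUnder_flip)

section Martingale

variable {Ω : Type*} {m0 : MeasurableSpace Ω} {P : Measure Ω}

lemma integral_sq_sub_condExp_le [IsFiniteMeasure P] {m : MeasurableSpace Ω} (hm : m ≤ m0)
    {X : Ω → ℝ} (hX : MemLp X 2 P) :
    ∫ ω, (X ω - P[X|m] ω) ^ 2 ∂P ≤ ∫ ω, X ω ^ 2 ∂P :=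
  calc ∫ ω, (X ω - P[X|m] ω) ^ 2 ∂P = ∫ ω, Var[X; P | m] ω ∂P := (integral_condExp hm).symm
    _ ≤ ∫ ω, P[X ^ 2|m] ω ∂P :=
      integral_mono_ae integrable_condVar integrable_condExp (condVar_ae_le_condExp_sq hm hX)
    _ = ∫ ω, X ω ^ 2 ∂P := integral_condExp hm

lemma MeasureTheory.Martingale.integral_sq_eq_sum [IsFiniteMeasure P] {ℱ : Filtration ℕ m0}
    {M : ℕ → Ω → ℝ} (hM : Martingale M ℱ P) (hM2 : ∀ n, MemLp (M n) 2 P) (n : ℕ) :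
    ∫ ω, M n ω ^ 2 ∂P
      = ∫ ω, M 0 ω ^ 2 ∂P + ∑ i ∈ range n, ∫ ω, (M (i + 1) ω - M i ω) ^ 2 ∂P := by
  induction n with
  | zero => simp
  | succ n ih =>
    set D := M (n + 1) - M n
    have hD2 : MemLp D 2 P := (hM2 (n + 1)).sub (hM2 n)
    have hcondD : P[D|ℱ n] =ᵐ[P] 0 := by
      filter_upwards [condExp_sub (m := ℱ n) ((hM2 (n + 1)).integrable one_le_two)
        ((hM2 n).integrable one_le_two), hM.condExp_ae_eq (n.le_add_right 1)] with ω hsub hsucc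
      rw [hsub, Pi.sub_apply, hsucc, condExp_of_stronglyMeasurable (ℱ.le n)
        (hM.stronglyMeasurable n) ((hM2 n).integrable one_le_two), sub_self, Pi.zero_apply]
    have hcross : ∫ ω, M n ω * D ω ∂P = 0 := by
      have hMD : Integrable (M n * D) P := (hM2 n).integrable_mul hD2
      calc ∫ ω, M n ω * D ω ∂P = ∫ ω, P[M n * D|ℱ n] ω ∂P := (integral_condExp (ℱ.le n)).symm
        _ = ∫ ω, M n ω * P[D|ℱ n] ω ∂P := integral_congr_ae
          (condExp_mul_of_stronglyMeasurable_left (hM.stronglyMeasurable n) hMD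
            (hD2.integrable one_le_two))
        _ = 0 := integral_eq_zero_of_ae (hcondD.mono fun ω h => by simp [h])
    have hsq : ∫ ω, M (n + 1) ω ^ 2 ∂P
        = ∫ ω, M n ω ^ 2 ∂P + 2 * ∫ ω, M n ω * D ω ∂P + ∫ ω, D ω ^ 2 ∂P := by
      rw [← integral_const_mul, ← integral_add, ← integral_add]
      · congr 1 with ω; simp only [D, Pi.sub_apply]; ring
      · exact (hM2 n).integrable_sq.add (((hM2 n).integrable_mul hD2).const_mul 2)
      · exact hD2.integrable_sq
      · exact (hM2 n).integrable_sq
      · exact ((hM2 n).integrable_mul hD2).const_mul 2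
    rw [hsq, hcross, ih, sum_range_succ]
    simp only [mul_zero, add_zero, Pi.sub_apply, D]
    ring

lemma eLpNorm_one_le_of_integral_sq_le [IsProbabilityMeasure P] {f : Ω → ℝ} (hf : MemLp f 2 P)
    {S : ℝ} (hS : ∫ ω, f ω ^ 2 ∂P ≤ S) : eLpNorm f 1 P ≤ ENNReal.ofReal ((S + 1) / 2) := by
  rw [eLpNorm_one_eq_lintegral_enorm,
    ← ofReal_integral_norm_eq_lintegral_enorm (hf.integrable one_le_two)]
  refine ENNReal.ofReal_le_ofReal ?_
  calc ∫ ω, ‖f ω‖ ∂P ≤ ∫ ω, (f ω ^ 2 + 1) / 2 ∂P := by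
        refine integral_mono (hf.integrable one_le_two).norm
          ((hf.integrable_sq.add (integrable_const 1)).div_const 2) fun ω => ?_
        nlinarith [sq_nonneg (|f ω| - 1), sq_abs (f ω), Real.norm_eq_abs (f ω)]
    _ = ((∫ ω, f ω ^ 2 ∂P) + 1) / 2 := by
        rw [integral_div, integral_add hf.integrable_sq (integrable_const 1)]
        simp
    _ ≤ (S + 1) / 2 := by linarith

theorem ae_tendsto_sum_sub_condExp_div_zero [IsProbabilityMeasure P] {ℱ : Filtration ℕ m0}
    {ξ : ℕ → Ω → ℝ} (hξm : ∀ i, StronglyMeasurable[ℱ (i + 1)] (ξ i))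
    (hξ2 : ∀ i, MemLp (ξ i) 2 P)
    (hsum : Summable fun i : ℕ => ((i + 1 : ℝ) ^ 2)⁻¹ * ∫ ω, ξ i ω ^ 2 ∂P) :
    ∀ᵐ ω ∂P, Tendsto (fun n : ℕ => (∑ i ∈ range n, (ξ i ω - P[ξ i|ℱ i] ω)) / n) atTop (𝓝 0) := by
  set η : ℕ → Ω → ℝ := fun i => (i + 1 : ℝ)⁻¹ • ξ i
  set M := martingalePart (fun n => ∑ i ∈ range n, η i) ℱ P
  have hη2 : ∀ i, MemLp (η i) 2 P := fun i => (hξ2 i).const_smul _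
  have hM : Martingale M ℱ P := by
    refine martingale_martingalePart (fun n => ?_) fun n =>
      integrable_finsetSum' _ fun i _ => (hη2 i).integrable one_le_two
    refine Finset.stronglyMeasurable_sum _ fun i hi => ?_
    exact ((hξm i).mono (ℱ.mono (mem_range.1 hi))).const_smul _
  have hM_eq : ∀ n, M n = ∑ i ∈ range n, (η i - P[η i|ℱ i]) := fun n => by
    simp [M, martingalePart_eq_sum, sum_range_succ]
  have hM2 : ∀ n, MemLp (M n) 2 P := fun n => by
    rw [hM_eq]
    exact memLp_finsetSum' _ fun i _ => (hη2 i).sub ((hη2 i).condExp one_le_two)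
  have hL2 : ∀ n, ∫ ω, M n ω ^ 2 ∂P ≤ ∑' i : ℕ, ((i + 1 : ℝ) ^ 2)⁻¹ * ∫ ω, ξ i ω ^ 2 ∂P := by
    intro n
    have hinc : ∀ i, ∫ ω, (M (i + 1) ω - M i ω) ^ 2 ∂P
        ≤ ((i + 1 : ℝ) ^ 2)⁻¹ * ∫ ω, ξ i ω ^ 2 ∂P := fun i => by
      simp only [hM_eq, sum_range_succ, Finset.sum_apply, add_sub_cancel_left, Pi.sub_apply]
      refine (integral_sq_sub_condExp_le (ℱ.le i) (hη2 i)).trans_eq ?_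
      rw [← integral_const_mul]
      congr 1 with ω
      simp only [η, Pi.smul_apply, smul_eq_mul, mul_pow, inv_pow]
    rw [hM.integral_sq_eq_sum hM2, hM_eq 0]
    simpa using (sum_le_sum fun i _ => hinc i).trans
      (hsum.sum_le_tsum _ fun i _ => by positivity)
  have hconv := hM.submartingale.exists_ae_tendsto_of_bdd
    fun n => eLpNorm_one_le_of_integral_sq_le (hM2 n) (hL2 n)
  have hsmul : ∀ᵐ ω ∂P, ∀ i, P[η i|ℱ i] ω = (i + 1 : ℝ)⁻¹ * P[ξ i|ℱ i] ω :=
    ae_all_iff.2 fun i => condExp_smul _ _ _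
  filter_upwards [hconv, hsmul] with ω ⟨L, hL⟩ hω
  refine tendsto_sum_range_div_zero_of_tendsto_sum_div_succ (L := L) (hL.congr fun n => ?_)
  simp only [hM_eq, Finset.sum_apply, Pi.sub_apply, hω, η, Pi.smul_apply, smul_eq_mul]
  exact sum_congr rfl fun i _ => by ring

end Martingale

lemma measurable_truncation_abs (A : ℝ) : Measurable (truncation (fun x : ℝ => |x|) A) :=
  (measurable_id.indicator measurableSet_Ioc).comp measurable_abs

lemma truncation_abs_nonneg (A x : ℝ) : 0 ≤ truncation (fun x : ℝ => |x|) A x :=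
  truncation_nonneg A (abs_nonneg x)

lemma truncation_abs_le (A x : ℝ) : truncation (fun x : ℝ => |x|) A x ≤ |A| :=
  (le_abs_self _).trans (abs_truncation_le_bound _ A x)

lemma truncation_abs_le_abs (A x : ℝ) : truncation (fun x : ℝ => |x|) A x ≤ |x| :=
  (le_abs_self _).trans ((abs_truncation_le_abs_self _ A x).trans (abs_abs x).le)

lemma truncation_abs_of_abs_le {A x : ℝ} (h : |x| ≤ A) :
    truncation (fun x : ℝ => |x|) A x = |x| := by
  rcases (abs_nonneg x).eq_or_lt with hx | hx
  · simp [truncation, ← hx]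
  · exact Set.indicator_of_mem (Set.mem_Ioc.2 ⟨by linarith, h⟩) _

section MomentsOfLaw

variable (μ : Measure ℝ) [IsProbabilityMeasure μ]

/- Mathlib proves these bounds for the canonical measure `ℙ` of a `MeasureSpace`; here `ℝ` is
given the measure `μ`. -/

lemma tsum_measure_abs_gt_lt_top (hμ : Integrable (fun x : ℝ => |x|) μ) :
    ∑' j : ℕ, μ {x | |x| ∈ Set.Ioi (j : ℝ)} < ∞ :=
  @tsum_prob_mem_Ioi_lt_top ℝ { volume := μ } ‹_› _ hμ fun _ => abs_nonneg _

lemma sum_inv_sq_mul_integral_truncation_abs_sq_le (hμ : Integrable (fun x : ℝ => |x|) μ)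
    (K : ℕ) :
    ∑ j ∈ range K, ((j : ℝ) ^ 2)⁻¹ * ∫ x, truncation (fun x : ℝ => |x|) j x ^ 2 ∂μ
      ≤ 2 * ∫ x, |x| ∂μ :=
  @sum_variance_truncation_le ℝ { volume := μ } ‹_› _ hμ (fun _ => abs_nonneg _) K

end MomentsOfLaw

namespace MeasureTheory.Filtration

variable {Ω β : Type*} {m0 : MeasurableSpace Ω} [mβ : MeasurableSpace β] (X : ℕ → Ω → β)
  (hX : ∀ n, Measurable (X n))

def naturalFromOne : Filtration ℕ m0 where
  seq n := ⨆ k ∈ Icc 1 n, MeasurableSpace.comap (X k) mβ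
  mono' _ _ hij := biSup_mono fun _ hk => Icc_subset_Icc_right hij hk
  le' _ := iSup₂_le fun k _ => (hX k).comap_le

lemma naturalFromOne_zero : naturalFromOne (m0 := m0) X hX 0 = ⊥ :=
  iSup₂_eq_bot.2 fun _ hk => absurd (mem_Icc.1 hk) (by omega)

lemma measurable_naturalFromOne (n : ℕ) :
    Measurable[naturalFromOne (m0 := m0) X hX (n + 1)] (X (n + 1)) :=
  Measurable.of_comap_le (le_biSup (fun k => MeasurableSpace.comap (X k) mβ)
    (mem_Icc.2 ⟨by omega, le_rfl⟩))

end MeasureTheory.Filtration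

section SandwichedLaws

variable {Ω : Type*} {m0 : MeasurableSpace Ω} {P : Measure Ω} {μ : Measure ℝ} {a : ℝ}

/-- Since `P[f ∘ Y | m]` integrates `f` against the conditional law of `Y` given `m`, this says
that this law has a `μ`-density with values in `[a, a⁻¹]`. -/
def HasSandwichedCondLaw (Y : Ω → ℝ) (m : MeasurableSpace Ω) (P : Measure[m0] Ω)
    (μ : Measure ℝ) (a : ℝ) : Prop :=
  ∀ f : ℝ → ℝ, Measurable f → (∀ x, 0 ≤ f x) → (∃ B, ∀ x, f x ≤ B) →
    ∀ᵐ ω ∂P, a * ∫ x, f x ∂μ ≤ P[fun ω' => f (Y ω')|m] ω ∧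
      P[fun ω' => f (Y ω')|m] ω ≤ a⁻¹ * ∫ x, f x ∂μ

lemma HasSandwichedCondLaw.integral_comp_le [IsProbabilityMeasure P] {Y : Ω → ℝ}
    {m : MeasurableSpace Ω} (hY : HasSandwichedCondLaw Y m P μ a) (hm : m ≤ m0) {f : ℝ → ℝ}
    (hf : Measurable f) (hf0 : ∀ x, 0 ≤ f x) (hfB : ∃ B, ∀ x, f x ≤ B) :
    ∫ ω, f (Y ω) ∂P ≤ a⁻¹ * ∫ x, f x ∂μ := by
  rw [← integral_condExp hm]
  simpa using integral_mono_ae integrable_condExp (integrable_const (a⁻¹ * ∫ x, f x ∂μ))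
    ((hY f hf hf0 hfB).mono fun _ h => h.2)

lemma HasSandwichedCondLaw.measure_preimage_le [IsProbabilityMeasure P] [IsFiniteMeasure μ]
    {Y : Ω → ℝ} {m : MeasurableSpace Ω} (hY : HasSandwichedCondLaw Y m P μ a) (hm : m ≤ m0)
    (hYm : Measurable[m0] Y) (ha : 0 ≤ a) {s : Set ℝ} (hs : MeasurableSet s) :
    P (Y ⁻¹' s) ≤ ENNReal.ofReal a⁻¹ * μ s := by
  have h := hY.integral_comp_le hm (measurable_const.indicator hs) (f := s.indicator 1)
    (Set.indicator_nonneg fun _ _ => zero_le_one)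
    ⟨1, Set.indicator_le_self' fun _ _ => zero_le_one⟩
  change ∫ ω, (Y ⁻¹' s).indicator 1 ω ∂P ≤ _ at h
  rw [integral_indicator_one (hYm hs), integral_indicator_one hs] at h
  rw [← ofReal_measureReal, ← ofReal_measureReal, ← ENNReal.ofReal_mul (inv_nonneg.2 ha)]
  exact ENNReal.ofReal_le_ofReal h

lemma HasSandwichedCondLaw.truncation_abs {Y : Ω → ℝ} {m : MeasurableSpace Ω}
    (hY : HasSandwichedCondLaw Y m P μ a) (A : ℝ) :
    ∀ᵐ ω ∂P, a * ∫ x, truncation (fun x : ℝ => |x|) A x ∂μ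
        ≤ P[fun ω' => truncation (fun x : ℝ => |x|) A (Y ω')|m] ω ∧
      P[fun ω' => truncation (fun x : ℝ => |x|) A (Y ω')|m] ω
        ≤ a⁻¹ * ∫ x, truncation (fun x : ℝ => |x|) A x ∂μ :=
  hY _ (measurable_truncation_abs A) (truncation_abs_nonneg A) ⟨|A|, truncation_abs_le A⟩

lemma HasSandwichedCondLaw.integral_truncation_abs_sq_le [IsProbabilityMeasure P] {Y : Ω → ℝ}
    {m : MeasurableSpace Ω} (hY : HasSandwichedCondLaw Y m P μ a) (hm : m ≤ m0) (A : ℝ) :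
    ∫ ω, truncation (fun x : ℝ => |x|) A (Y ω) ^ 2 ∂P
      ≤ a⁻¹ * ∫ x, truncation (fun x : ℝ => |x|) A x ^ 2 ∂μ :=
  hY.integral_comp_le hm ((measurable_truncation_abs A).pow_const 2)
    (fun _ => sq_nonneg _)
    ⟨|A| ^ 2, fun x => pow_le_pow_left₀ (truncation_abs_nonneg A x) (truncation_abs_le A x) 2⟩

lemma memLp_truncation_abs_comp [IsFiniteMeasure P] {Y : Ω → ℝ} (hY : Measurable Y) (A : ℝ)
    (p : ℝ≥0∞) : MemLp (fun ω => truncation (fun x : ℝ => |x|) A (Y ω)) p P :=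
  MemLp.of_bound ((measurable_truncation_abs A).comp hY).aestronglyMeasurable |A|
    (ae_of_all _ fun ω => abs_truncation_le_bound _ A (Y ω))

variable {ℱ : Filtration ℕ m0} {Y : ℕ → Ω → ℝ}

lemma ae_eventually_abs_le_of_hasSandwichedCondLaw [IsProbabilityMeasure P]
    [IsProbabilityMeasure μ] (hμ : Integrable (fun x : ℝ => |x|) μ) (ha : 0 ≤ a)
    (hYm : ∀ i, Measurable[m0] (Y i)) (hY : ∀ i, HasSandwichedCondLaw (Y i) (ℱ i) P μ a) :
    ∀ᵐ ω ∂P, ∀ᶠ i : ℕ in atTop, |Y i ω| ≤ i + 1 := by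
  have hterm : ∀ i : ℕ, P (Y i ⁻¹' {y | |y| ∈ Set.Ioi ((i : ℝ) + 1)})
      ≤ ENNReal.ofReal a⁻¹ * μ {x | |x| ∈ Set.Ioi (i : ℝ)} := fun i =>
    ((hY i).measure_preimage_le (ℱ.le i) (hYm i) ha (measurable_abs measurableSet_Ioi)).trans <| by
      gcongr
      exact fun x (hx : (i : ℝ) + 1 < |x|) => show (i : ℝ) < |x| by linarith
  have hsum : ∑' i : ℕ, P (Y i ⁻¹' {y | |y| ∈ Set.Ioi ((i : ℝ) + 1)}) ≠ ∞ :=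
    ne_top_of_le_ne_top
      (ENNReal.mul_ne_top ENNReal.ofReal_ne_top (tsum_measure_abs_gt_lt_top μ hμ).ne)
      ((ENNReal.tsum_le_tsum hterm).trans_eq ENNReal.tsum_mul_left)
  filter_upwards [ae_eventually_notMem hsum] with ω hω
  filter_upwards [hω] with i hi
  simpa using hi

theorem ae_limsup_sum_div_le [IsProbabilityMeasure P] [IsProbabilityMeasure μ]
    (hμ : Integrable (fun x : ℝ => |x|) μ) (ha : 0 < a) (hY0 : ∀ i ω, 0 ≤ Y i ω)
    (hYm : ∀ i, Measurable[ℱ (i + 1)] (Y i)) (hY : ∀ i, HasSandwichedCondLaw (Y i) (ℱ i) P μ a) :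
    ∀ᵐ ω ∂P, IsBoundedUnder (· ≤ ·) atTop (fun n : ℕ => (∑ i ∈ range n, Y i ω) / n) ∧
      limsup (fun n : ℕ => (∑ i ∈ range n, Y i ω) / n) atTop ≤ a⁻¹ * ∫ x, |x| ∂μ := by
  have hYm0 : ∀ i, Measurable[m0] (Y i) := fun i => (hYm i).mono (ℱ.le _) le_rfl
  set Z : ℕ → Ω → ℝ := fun i ω => truncation (fun x : ℝ => |x|) (i + 1) (Y i ω)
  have hZ2 : ∀ n, ∑ i ∈ range n, ((i + 1 : ℝ) ^ 2)⁻¹ * ∫ ω, Z i ω ^ 2 ∂P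
      ≤ a⁻¹ * (2 * ∫ x, |x| ∂μ) := fun n => by
    calc ∑ i ∈ range n, ((i + 1 : ℝ) ^ 2)⁻¹ * ∫ ω, Z i ω ^ 2 ∂P
        ≤ ∑ i ∈ range n, ((i + 1 : ℝ) ^ 2)⁻¹ *
            (a⁻¹ * ∫ x, truncation (fun x : ℝ => |x|) (i + 1) x ^ 2 ∂μ) :=
          sum_le_sum fun i _ => mul_le_mul_of_nonneg_left
            ((hY i).integral_truncation_abs_sq_le (ℱ.le i) _) (by positivity)
      _ = a⁻¹ * ∑ j ∈ range (n + 1),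
            ((j : ℝ) ^ 2)⁻¹ * ∫ x, truncation (fun x : ℝ => |x|) j x ^ 2 ∂μ := by
          simp [sum_range_succ', mul_sum, mul_left_comm]
      _ ≤ a⁻¹ * (2 * ∫ x, |x| ∂μ) := mul_le_mul_of_nonneg_left
          (sum_inv_sq_mul_integral_truncation_abs_sq_le μ hμ _) (inv_nonneg.2 ha.le)
  have hslln := ae_tendsto_sum_sub_condExp_div_zero (P := P) (ℱ := ℱ) (ξ := Z)
    (fun i => ((measurable_truncation_abs _).comp (hYm i)).stronglyMeasurable)
    (fun i => memLp_truncation_abs_comp (hYm0 i) _ 2)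
    (summable_of_sum_range_le (fun i => by positivity) hZ2)
  have hcondExp_le : ∀ᵐ ω ∂P, ∀ i, P[Z i|ℱ i] ω ≤ a⁻¹ * ∫ x, |x| ∂μ := ae_all_iff.2 fun i => by
    filter_upwards [(hY i).truncation_abs (i + 1)] with ω h
    exact h.2.trans (mul_le_mul_of_nonneg_left
      (integral_truncation_le_integral_of_nonneg hμ fun x => abs_nonneg x) (inv_nonneg.2 ha.le))
  filter_upwards [hslln, hcondExp_le,
    ae_eventually_abs_le_of_hasSandwichedCondLaw hμ ha.le hYm0 hY]
    with ω hZW hW hYZ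
  refine limsup_sum_div_le (fun i => hY0 i ω) (hYZ.mono fun i hi => ?_) hZW hW
  simp only [Z, truncation_abs_of_abs_le hi, abs_of_nonneg (hY0 i ω)]

theorem ae_le_liminf_sum_div [IsProbabilityMeasure P] (hμ : Integrable (fun x : ℝ => |x|) μ)
    (hY0 : ∀ i ω, 0 ≤ Y i ω) (hYm : ∀ i, Measurable[ℱ (i + 1)] (Y i))
    (hY : ∀ i, HasSandwichedCondLaw (Y i) (ℱ i) P μ a) :
    ∀ᵐ ω ∂P, IsBoundedUnder (· ≤ ·) atTop (fun n : ℕ => (∑ i ∈ range n, Y i ω) / n) →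
      a * ∫ x, |x| ∂μ ≤ liminf (fun n : ℕ => (∑ i ∈ range n, Y i ω) / n) atTop := by
  have hK : ∀ K : ℕ, ∀ᵐ ω ∂P,
      IsBoundedUnder (· ≤ ·) atTop (fun n : ℕ => (∑ i ∈ range n, Y i ω) / n) →
      a * ∫ x, truncation (fun x : ℝ => |x|) K x ∂μ
        ≤ liminf (fun n : ℕ => (∑ i ∈ range n, Y i ω) / n) atTop := by
    intro K
    set Z : ℕ → Ω → ℝ := fun i ω => truncation (fun x : ℝ => |x|) K (Y i ω)
    have hsummable : Summable fun i : ℕ => ((i + 1 : ℝ) ^ 2)⁻¹ := by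
      simpa using (summable_nat_add_iff 1).2 (Real.summable_nat_pow_inv.2 one_lt_two)
    have hslln := ae_tendsto_sum_sub_condExp_div_zero (P := P) (ℱ := ℱ) (ξ := Z)
      (fun i => ((measurable_truncation_abs _).comp (hYm i)).stronglyMeasurable)
      (fun i => memLp_truncation_abs_comp ((hYm i).mono (ℱ.le _) le_rfl) _ 2)
      ((hsummable.mul_right (a⁻¹ * ∫ x, truncation (fun x : ℝ => |x|) K x ^ 2 ∂μ)).of_nonneg_of_le
        (fun i => by positivity) fun i => mul_le_mul_of_nonneg_left
          ((hY i).integral_truncation_abs_sq_le (ℱ.le i) K) (by positivity))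
    have hle_condExp : ∀ᵐ ω ∂P, ∀ i,
        a * ∫ x, truncation (fun x : ℝ => |x|) K x ∂μ ≤ P[Z i|ℱ i] ω :=
      ae_all_iff.2 fun i => ((hY i).truncation_abs K).mono fun _ h => h.1
    filter_upwards [hslln, hle_condExp] with ω hZW hW hbdd
    exact le_liminf_sum_div
      (fun i => (truncation_abs_le_abs _ _).trans_eq (abs_of_nonneg (hY0 i ω))) hZW hW hbdd
  have hlim : Tendsto (fun K : ℕ => a * ∫ x, truncation (fun x : ℝ => |x|) K x ∂μ) atTop
      (𝓝 (a * ∫ x, |x| ∂μ)) :=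
    ((tendsto_integral_truncation hμ).comp tendsto_natCast_atTop_atTop).const_mul a
  filter_upwards [ae_all_iff.2 hK] with ω hω hbdd
  exact le_of_tendsto' hlim fun K => hω K hbdd

end SandwichedLaws

/-- Guo's law of large numbers under sandwiched conditional laws
(Lemma 9 of Guo (2014)): if the conditional law of `X_{n+1}` given `X_1,…,X_n`
has density w.r.t. `μ` bounded between `a` and `a⁻¹` (and similarly for the law
of `X_1`), then a.s. `a m_μ ≤ liminf (1/n)∑ X_k ≤ limsup (1/n)∑ X_k ≤ a⁻¹ m_μ`. -/
theorem lln_sandwiched_conditional_laws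
    {Ω : Type*} [MeasurableSpace Ω] (P : Measure Ω) [IsProbabilityMeasure P]
    (μ : Measure ℝ) [IsProbabilityMeasure μ]
    (hμnn : ∀ᵐ x ∂μ, 0 ≤ x) (hμmean : Integrable id μ)
    (a : ℝ) (ha : a ∈ Set.Ioo (0 : ℝ) 1)
    (X : ℕ → Ω → ℝ) (hXm : ∀ n, Measurable (X n)) (hXnn : ∀ n ω, 0 ≤ X n ω)
    (hX1 : ∀ f : ℝ → ℝ, Measurable f → (∀ x, 0 ≤ f x) → (∃ B, ∀ x, f x ≤ B) →
      a * ∫ x, f x ∂μ ≤ ∫ ω, f (X 1 ω) ∂P ∧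
      ∫ ω, f (X 1 ω) ∂P ≤ a⁻¹ * ∫ x, f x ∂μ)
    (hcond : ∀ n : ℕ, 1 ≤ n → ∀ f : ℝ → ℝ, Measurable f → (∀ x, 0 ≤ f x) →
      (∃ B, ∀ x, f x ≤ B) →
      ∀ᵐ ω ∂P,
        a * ∫ x, f x ∂μ ≤
          (P[fun ω' => f (X (n + 1) ω') |
            ⨆ k ∈ Finset.Icc 1 n, MeasurableSpace.comap (X k) inferInstance]) ω ∧
        (P[fun ω' => f (X (n + 1) ω') |
            ⨆ k ∈ Finset.Icc 1 n, MeasurableSpace.comap (X k) inferInstance]) ω ≤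
          a⁻¹ * ∫ x, f x ∂μ) :
    ∀ᵐ ω ∂P,
      a * (∫ x, x ∂μ) ≤
        liminf (fun n : ℕ => (∑ k ∈ Finset.Icc 1 n, X k ω) / n) atTop ∧
      limsup (fun n : ℕ => (∑ k ∈ Finset.Icc 1 n, X k ω) / n) atTop ≤
        a⁻¹ * ∫ x, x ∂μ := by
  set ℱ := Filtration.naturalFromOne (m0 := ‹_›) X hXm
  have hY : ∀ i, HasSandwichedCondLaw (X (i + 1)) (ℱ i) P μ a
    | 0 => fun f hf hf0 hfB => by
      rw [Filtration.naturalFromOne_zero, condExp_bot]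
      exact ae_of_all _ fun _ => hX1 f hf hf0 hfB
    | n + 1 => hcond (n + 1) (by omega)
  have hμabs : ∫ x, |x| ∂μ = ∫ x, x ∂μ :=
    integral_congr_ae (hμnn.mono fun x hx => abs_of_nonneg hx)
  have hYm := Filtration.measurable_naturalFromOne X hXm
  filter_upwards [ae_limsup_sum_div_le hμmean.abs ha.1 (fun i => hXnn (i + 1)) hYm hY,
    ae_le_liminf_sum_div hμmean.abs (fun i => hXnn (i + 1)) hYm hY] with ω ⟨hbdd, hsup⟩ hinf
  simp only [sum_Icc_one_eq_sum_range, ← hμabs]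
  exact ⟨hinf hbdd, hsup⟩
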